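/- On ℝ⁶ with coordinates (v₁,…,v₆) define the vector fields X₁ᴿ = ∂/∂v₁ + v₅ ∂/∂v₄ − (1/2)v₅² ∂/∂v₆, X₂ᴿ = v₁ ∂/∂v₁ + ∂/∂v₂ + (1/2)v₄ ∂/∂v₄ − (1/2)v₅ ∂/∂v₅, X₃ᴿ = v₁² ∂/∂v₁ + 2v₁ ∂/∂v₂ + e^{v₂} ∂/∂v₃ − v₄ ∂/∂v₅ + (1/2)v₄² ∂/∂v₆, X₄ᴿ = ∂/∂v₄, X₅ᴿ = ∂/∂v₅ − v₄ ∂/∂v₆, X₆ᴿ = ∂/∂v₆. Then at every point of ℝ⁶ one has [X₁ᴿ,X₂ᴿ] = X₁ᴿ, [X₁ᴿ,X₃ᴿ] = 2X₂ᴿ, [X₂ᴿ,X₃ᴿ] = X₃ᴿ, [X₁ᴿ,X₄ᴿ] = 0, [X₂ᴿ,X₄ᴿ] = −(1/2)X₄ᴿ, [X₃ᴿ,X₄ᴿ] = X₅ᴿ, [X₁ᴿ,X₅ᴿ] = −X₄ᴿ, [X₂ᴿ,X₅ᴿ] = (1/2)X₅ᴿ, [X₃ᴿ,X₅ᴿ]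 = 0, [X₄ᴿ,X₅ᴿ] = −X₆ᴿ, and [Xαᴿ,X₆ᴿ] = 0 for all α ∈ {1,…,5}; hence X₁ᴿ,…,X₆ᴿ span a 6-dimensional Lie algebra isomorphic to the semidirect sum 𝔰𝔩₂ ⊕_S 𝔥₃ (the Vessiot–Guldberg Lie algebra of the dissipative quantum harmonic oscillator system). -/

import Mathlib

/-- The pointwise Lie bracket of two vector fields on (an open subset of) ℝⁿ,
    `[V,W](p) = (DW)(p)(V(p)) − (DV)(p)(W(p))`. -/
noncomputable def vbracket {n : ℕ} (V W : (Fin n → ℝ) → (Fin n → ℝ)) :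
    (Fin n → ℝ) → (Fin n → ℝ) :=
  fun p => fderiv ℝ W p (V p) - fderiv ℝ V p (W p)

/-- The right-invariant vector fields X₁ᴿ,…,X₆ᴿ of the dissipative quantum
harmonic oscillator system on ℝ⁶, in coordinates (v₁,…,v₆) = (p 0,…,p 5). -/
noncomputable def doX : Fin 6 → (Fin 6 → ℝ) → (Fin 6 → ℝ) :=
  ![fun p => ![1, 0, 0, p 4, 0, -(p 4) ^ 2 / 2],
    fun p => ![p 0, 1, 0, p 3 / 2, -(p 4) / 2, 0],
    fun p => ![(p 0) ^ 2, 2 * p 0, Real.exp (p 1), 0, -(p 3), (p 3) ^ 2 / 2],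
    fun _ => ![0, 0, 0, 1, 0, 0],
    fun p => ![0, 0, 0, 0, 1, -(p 3)],
    fun _ => ![0, 0, 0, 0, 0, 1]]

/-!
The derivative `DV(p) v` of a field is the derivative of `t ↦ V (p + t v)` at `0`, so the
Jacobians of the six fields need only one-variable calculus of polynomials and `exp`; each
commutation relation is then a polynomial identity in the coordinates.
-/

theorem fderiv_apply_eq_deriv_line {𝕜 E F ι : Type*} [NontriviallyNormedField 𝕜]
    [NormedAddCommGroup E] [NormedSpace 𝕜 E] [NormedAddCommGroup F] [NormedSpace 𝕜 F]
    [Fintype ι] {V : E → ι → F} {p : E}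
    (hV : DifferentiableAt 𝕜 V p) (v : E) (i : ι) :
    fderiv 𝕜 V p v i = deriv (fun t : 𝕜 => V (p + t • v) i) 0 :=
  (hasDerivAt_pi.1 (hV.hasFDerivAt.hasLineDerivAt v) i).deriv.symm

theorem differentiable_doX (α : Fin 6) : Differentiable ℝ (doX α) := by
  fin_cases α <;> refine differentiable_pi.2 fun i => ?_ <;> fin_cases i <;> simp [doX] <;> fun_prop

noncomputable def doXDeriv : Fin 6 → (Fin 6 → ℝ) → (Fin 6 → ℝ) → (Fin 6 → ℝ) :=
  ![fun p v => ![0, 0, 0, v 4, 0, -(p 4 * v 4)],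
    fun _ v => ![v 0, 0, 0, v 3 / 2, -(v 4) / 2, 0],
    fun p v => ![2 * p 0 * v 0, 2 * v 0, Real.exp (p 1) * v 1, 0, -(v 3), p 3 * v 3],
    fun _ _ => 0,
    fun _ v => ![0, 0, 0, 0, 0, -(v 3)],
    fun _ _ => 0]

theorem fderiv_doX_apply (α : Fin 6) (p v : Fin 6 → ℝ) :
    fderiv ℝ (doX α) p v = doXDeriv α p v := by
  ext i
  rw [fderiv_apply_eq_deriv_line (differentiable_doX α p)]
  fin_cases α <;> fin_cases i <;> simp [doX, doXDeriv] <;> ring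

theorem vbracket_doX (α β : Fin 6) (p : Fin 6 → ℝ) :
    vbracket (doX α) (doX β) p = doXDeriv β p (doX α p) - doXDeriv α p (doX β p) := by
  simp only [vbracket, fderiv_doX_apply]

theorem vbracket_doX_five (α : Fin 6) (p : Fin 6 → ℝ) : vbracket (doX α) (doX 5) p = 0 := by
  rw [vbracket_doX]
  ext i
  fin_cases α <;> fin_cases i <;> simp [doX, doXDeriv]

/-- The commutation relations of the Vessiot–Guldberg Lie algebra
𝔰𝔩₂ ⊕_S 𝔥₃ of the dissipative quantum harmonic oscillator system. -/
theorem dissipative_oscillator_commutation_relations :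
    ∀ p : Fin 6 → ℝ,
      vbracket (doX 0) (doX 1) p = doX 0 p ∧
      vbracket (doX 0) (doX 2) p = (2 : ℝ) • doX 1 p ∧
      vbracket (doX 1) (doX 2) p = doX 2 p ∧
      vbracket (doX 0) (doX 3) p = 0 ∧
      vbracket (doX 1) (doX 3) p = -((1 / 2 : ℝ) • doX 3 p) ∧
      vbracket (doX 2) (doX 3) p = doX 4 p ∧
      vbracket (doX 0) (doX 4) p = -(doX 3 p) ∧
      vbracket (doX 1) (doX 4) p = (1 / 2 : ℝ) • doX 4 p ∧
      vbracket (doX 2) (doX 4) p = 0 ∧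
      vbracket (doX 3) (doX 4) p = -(doX 5 p) ∧
      (∀ α : Fin 6, α ≠ 5 → vbracket (doX α) (doX 5) p = 0) := by
  intro p
  refine ⟨?_, ?_, ?_, ?_, ?_, ?_, ?_, ?_, ?_, ?_, fun α _ => vbracket_doX_five α p⟩ <;>
    · rw [vbracket_doX]
      ext i
      fin_cases i <;> simp [doX, doXDeriv] <;> ring
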